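/- For all integers m, n ≥ 1 with |n − m| ≥ 3 one has ⟨f_n, f_m⟩_S = 0. -/

import Mathlib

open Filter RealInnerProductSpace

variable {H : Type*} [NormedAddCommGroup H] [InnerProductSpace ℝ H]

/-- `Wlt P n` is the span of `P 0, …, P (n-1)`; thus `Wlt P 0 = ⊥ = W_{-1}` and
`Wlt P (n+1)` is the space `W_n = span{P_0, …, P_n}`. -/
def Wlt (P : ℕ → H) (n : ℕ) : Submodule ℝ H := Submodule.span ℝ (P '' Set.Iio n)

/-- `Wtot P` is the space `W = ⋃ₙ Wₙ` of all polynomials. -/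
def Wtot (P : ℕ → H) : Submodule ℝ H := Submodule.span ℝ (Set.range P)

/-- The Sobolev inner product `⟨f, g⟩_S = ⟨f, g⟩₂ + χ⟨Δf, Δg⟩₂`. -/
noncomputable def innerS (Δ : H →ₗ[ℝ] H) (χ : ℝ) (f g : H) : ℝ :=
  ⟪ f, g ⟫ + χ * ⟪ Δ f, Δ g ⟫

/-- The Sobolev norm `‖f‖_S = √(‖f‖₂² + χ‖Δf‖₂²)`. -/
noncomputable def normS (Δ : H →ₗ[ℝ] H) (χ : ℝ) (f : H) : ℝ :=
  Real.sqrt (‖f‖ ^ 2 + χ * ‖Δ f‖ ^ 2)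

section Legendre

variable {P p : ℕ → H} {G : H →ₗ[ℝ] H}

lemma Wlt_mono (P : ℕ → H) {a b : ℕ} (h : a ≤ b) : Wlt P a ≤ Wlt P b :=
  Submodule.span_mono (Set.image_mono fun _ hx => lt_of_lt_of_le hx h)

lemma Wlt_le_Wtot (P : ℕ → H) (n : ℕ) : Wlt P n ≤ Wtot P :=
  Submodule.span_mono (Set.image_subset_range _ _)

lemma mem_Wlt_succ_of_sub_mem {n : ℕ} {x : H} (hx : x - P n ∈ Wlt P n) :
    x ∈ Wlt P (n + 1) := by
  have hP : P n ∈ Wlt P (n + 1) := Submodule.subset_span ⟨n, Nat.lt_succ_self n, rfl⟩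
  simpa using (Wlt P (n + 1)).add_mem (Wlt_mono P n.le_succ hx) hP

lemma innerS_comm (Δ : H →ₗ[ℝ] H) (χ : ℝ) (f g : H) : innerS Δ χ f g = innerS Δ χ g f := by
  simp only [innerS, real_inner_comm]

lemma innerS_map_of_rightInverse {Δ : H →ₗ[ℝ] H} {χ : ℝ} {W : Submodule ℝ H}
    (hGinv : ∀ u ∈ W, Δ (G u) = u) {u v : H} (hu : u ∈ W) (hv : v ∈ W) :
    innerS Δ χ (G u) (G v) = ⟪ G u, G v ⟫ + χ * ⟪ u, v ⟫ := by
  rw [innerS, hGinv u hu, hGinv v hv]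

variable (hpmonic : ∀ n, p n - P n ∈ Wlt P n) (hportho : ∀ n, ∀ w ∈ Wlt P n, ⟪ p n, w ⟫ = 0)
include hpmonic hportho

lemma inner_p_eq_zero_of_lt {a b : ℕ} (hab : a < b) : ⟪ p a, p b ⟫ = 0 := by
  rw [real_inner_comm]
  exact hportho b _ (Wlt_mono P hab (mem_Wlt_succ_of_sub_mem (hpmonic a)))

/-- `⟪G p_a, G p_b⟫ = ⟪G² p_a, p_b⟫`, and `G² p_a` has degree `a + 2 < b`. -/
lemma inner_map_p_eq_zero_of_add_three_le
    (hGsym : ∀ u ∈ Wtot P, ∀ v ∈ Wtot P, ⟪ G u, v ⟫ = ⟪ u, G v ⟫)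
    (hGmap : ∀ n, ∀ u ∈ Wlt P (n + 1), G u ∈ Wlt P (n + 2))
    {a b : ℕ} (hab : a + 3 ≤ b) : ⟪ G (p a), G (p b) ⟫ = 0 := by
  have hGp : G (p a) ∈ Wlt P (a + 2) := hGmap a _ (mem_Wlt_succ_of_sub_mem (hpmonic a))
  have hGGp : G (G (p a)) ∈ Wlt P (a + 3) := hGmap (a + 1) _ hGp
  have hpb : p b ∈ Wtot P := Wlt_le_Wtot P _ (mem_Wlt_succ_of_sub_mem (hpmonic b))
  rw [← hGsym _ (Wlt_le_Wtot P _ hGp) _ hpb, real_inner_comm]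
  exact hportho b _ (Wlt_mono P hab hGGp)

end Legendre

theorem statement15_general
    (P : ℕ → H)
    (Δ G : H →ₗ[ℝ] H)
    (hGsym : ∀ u ∈ Wtot P, ∀ v ∈ Wtot P, ⟪ G u, v ⟫ = ⟪ u, G v ⟫)
    (hGinv : ∀ u ∈ Wtot P, Δ (G u) = u)
    (hGmap : ∀ n, ∀ u ∈ Wlt P (n + 1), G u ∈ Wlt P (n + 2))
    (χ : ℝ)
    (p : ℕ → H)
    (hpmonic : ∀ n, p n - P n ∈ Wlt P n)
    (hportho : ∀ n, ∀ w ∈ Wlt P n, ⟪ p n, w ⟫ = 0)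
    : ∀ m n : ℕ, 1 ≤ m → 1 ≤ n → (m + 3 ≤ n ∨ n + 3 ≤ m) →
      innerS Δ χ (G (p (n - 1))) (G (p (m - 1))) = 0 := by
  have hpW : ∀ a, p a ∈ Wtot P := fun a =>
    Wlt_le_Wtot P _ (mem_Wlt_succ_of_sub_mem (hpmonic a))
  have key : ∀ a b, a + 3 ≤ b → innerS Δ χ (G (p a)) (G (p b)) = 0 := fun a b hab => by
    rw [innerS_map_of_rightInverse hGinv (hpW a) (hpW b),
      inner_map_p_eq_zero_of_add_three_le hpmonic hportho hGsym hGmap hab,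
      inner_p_eq_zero_of_lt hpmonic hportho (by omega)]
    ring
  intro m n hm hn hmn
  rcases hmn with h | h
  · rw [innerS_comm]
    exact key _ _ (by omega)
  · exact key _ _ (by omega)

/-- For `m, n ≥ 1` with `|n − m| ≥ 3`: `⟨f_n, f_m⟩_S = 0` (where `f_n = Gp_{n−1}`). -/
theorem statement15
    (P : ℕ → H) (hP : LinearIndependent ℝ P)
    (Δ G : H →ₗ[ℝ] H)
    (hΔ0 : Δ (P 0) = 0) (hΔsucc : ∀ n, Δ (P (n + 1)) = P n)
    (hGsym : ∀ u ∈ Wtot P, ∀ v ∈ Wtot P, ⟪ G u, v ⟫ = ⟪ u, G v ⟫)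
    (hGinv : ∀ u ∈ Wtot P, Δ (G u) = u)
    (hGmap : ∀ n, ∀ u ∈ Wlt P (n + 1), G u ∈ Wlt P (n + 2))
    (χ : ℝ) (hχ : 0 < χ)
    (p : ℕ → H)
    (hpmonic : ∀ n, p n - P n ∈ Wlt P n)
    (hportho : ∀ n, ∀ w ∈ Wlt P n, ⟪ p n, w ⟫ = 0)
    : ∀ m n : ℕ, 1 ≤ m → 1 ≤ n → (m + 3 ≤ n ∨ n + 3 ≤ m) →
      innerS Δ χ (G (p (n - 1))) (G (p (m - 1))) = 0 :=
  statement15_general P Δ G hGsym hGinv hGmap χ p hpmonic hportho
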